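/- Let s, n be positive integers with s ≤ n. Then for every real number ξ, ∑_{p=1}^{s} (−1)^{s+p} · C(s−1, p−1) · (∏_{l=p}^{s−1} (n+l)/(n−s+l)) · ((1+ξ)^{s−p} − (1+ξ)^{n+p−1}) = −C(n−1, s−1)^{−1} · ∑_{k=2s−1}^{n+s−1} C(n+s−1, k) · C(k−s, s−1) · ξ^{k}. -/

import Mathlib

/-!
Put `j = s - p` and `N = n + s - 1`. The product equals `C(N, j) / C(n-1, j)`, so the left-hand
side is `C(n-1, s-1)⁻¹ ∑_{j<s} w_j ((1+ξ)^j - (1+ξ)^(N-j))` with integer weights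
`w_j = (-1)^j C(N, j) C(n-1-j, s-1-j)`. Expanding in powers of `ξ`, the coefficient of `ξ^k` in
`∑ w_j (1+ξ)^(N-j)` is `C(N, k)` times an alternating sum of the shape
`∑_v (-1)^v C(c-v, d-v) C(m, v) = C(c-m, d)`, a Vandermonde-type identity for the generalized
binomial coefficient, whose upper argument `c - m` may be negative. It evaluates to the
generalized `C(k-s, s-1)` for every `k ≤ N`; for `k < s` the same value comes out of
`∑ w_j (1+ξ)^j`, so the two parts cancel below `ξ^s`, and `C(k-s, s-1)` vanishes for
`s ≤ k < 2s-1`.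
-/

open Finset

theorem Ring.choose_neg_natCast_add_one (a d : ℕ) :
    Ring.choose (-((a : ℤ) + 1)) d = (-1) ^ d * ((a + d).choose d : ℤ) := by
  rw [Ring.choose_neg, show (a : ℤ) + 1 + d - 1 = ((a + d : ℕ) : ℤ) by push_cast; ring,
    Ring.choose_natCast, Units.smul_def, Int.coe_negOnePow_natCast, smul_eq_mul]

theorem sum_neg_one_pow_mul_choose_mul_choose (c d k : ℕ) (hdc : d ≤ c) :
    ∑ v ∈ range (d + 1), (-1 : ℤ) ^ v * (c - v).choose (d - v) * k.choose v
      = Ring.choose ((c : ℤ) - k) d := by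
  induction k generalizing c d with
  | zero => simp [sum_range_succ', Ring.choose_natCast]
  | succ k ih =>
    rcases d with _ | d
    · simp
    obtain ⟨c, rfl⟩ : ∃ c', c = c' + 1 := ⟨c - 1, by omega⟩
    have pascal := Ring.choose_succ_succ ((c : ℤ) - k) d
    have step : ∑ v ∈ range (d + 2),
          (-1 : ℤ) ^ v * (c + 1 - v).choose (d + 1 - v) * (k + 1).choose v
        = ∑ v ∈ range (d + 2), (-1 : ℤ) ^ v * (c + 1 - v).choose (d + 1 - v) * k.choose v
          - ∑ v ∈ range (d + 1), (-1 : ℤ) ^ v * (c - v).choose (d - v) * k.choose v := by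
      simp only [sum_range_succ' _ (d + 1), Nat.choose_succ_succ', Nat.add_sub_add_right,
        Nat.choose_zero_right, Nat.cast_add, mul_add, sum_add_distrib, pow_succ, mul_neg_one,
        neg_mul, sum_neg_distrib]
      ring
    rw [step, ih (c + 1) (d + 1) hdc, ih c d (by omega)]
    push_cast
    rw [show (c : ℤ) + 1 - k = c - k + 1 by ring, pascal,
      show (c : ℤ) + 1 - (k + 1) = c - k by ring]
    ring

theorem Nat.choose_mul_choose_sub_comm (N j k : ℕ) :
    N.choose j * (N - j).choose k = N.choose k * (N - k).choose j := by
  have h₁ := Nat.choose_mul (n := N) (Nat.le_add_right j k)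
  have h₂ := Nat.choose_mul (n := N) (Nat.le_add_left k j)
  rw [Nat.add_sub_cancel_left] at h₁
  rw [Nat.add_sub_cancel] at h₂
  rw [← h₁, ← h₂, Nat.choose_symm_add]

theorem one_add_pow_eq_sum_range {R : Type*} [CommSemiring R] (x : R) {j M : ℕ} (hjM : j < M) :
    (1 + x) ^ j = ∑ k ∈ range M, (j.choose k : R) * x ^ k := by
  rw [add_comm, add_pow]
  refine sum_subset (range_subset_range.2 hjM) (fun k _ hk => ?_) |>.trans
    (sum_congr rfl fun k _ => by ring)
  rw [Nat.choose_eq_zero_of_lt (by simpa using hk)]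
  simp

theorem sum_mul_one_add_pow {R : Type*} [CommSemiring R] (A : Finset ℕ) (w : ℕ → R)
    (e : ℕ → ℕ) {M : ℕ} (he : ∀ j ∈ A, e j < M) (x : R) :
    ∑ j ∈ A, w j * (1 + x) ^ e j
      = ∑ k ∈ range M, (∑ j ∈ A, w j * (e j).choose k) * x ^ k := by
  simp_rw [sum_mul]
  rw [sum_comm]
  refine sum_congr rfl fun j hj => ?_
  rw [one_add_pow_eq_sum_range x (he j hj), mul_sum]
  exact sum_congr rfl fun k _ => by ring

theorem prod_Icc_div_eq_choose_div_choose {K : Type*} [Field K] [CharZero K] {n s j : ℕ}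
    (hj : j < s) (hsn : s ≤ n) :
    ∏ l ∈ Icc (s - j) (s - 1), ((n + l : ℕ) : K) / ((n - s + l : ℕ) : K)
      = ((n + s - 1).choose j : K) / ((n - 1).choose j : K) := by
  have hIcc : Icc (s - j) (s - 1) = Ico (s - 1 + 1 - j) (s - 1 + 1 - 0) := by
    ext l; simp only [mem_Icc, mem_Ico]; omega
  rw [hIcc, ← prod_Ico_reflect _ _ (by omega), Nat.Ico_zero_eq_range,
    prod_congr rfl fun i hi => by
      have := mem_range.1 hi
      rw [show n + (s - 1 - i) = n + s - 1 - i by omega,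
        show n - s + (s - 1 - i) = n - 1 - i by omega],
    prod_div_distrib, ← Nat.cast_prod, ← Nat.cast_prod, ← Nat.descFactorial_eq_prod_range,
    ← Nat.descFactorial_eq_prod_range, Nat.descFactorial_eq_factorial_mul_choose,
    Nat.descFactorial_eq_factorial_mul_choose, Nat.cast_mul, Nat.cast_mul,
    mul_div_mul_left _ _ (Nat.cast_ne_zero.2 j.factorial_ne_zero)]

/-- The weight `w_j`: `C(n-1, s-1)` times the coefficient of the summand `p = s - j`. -/
def ussWeight (n s j : ℕ) : ℤ :=
  (-1) ^ j * (n + s - 1).choose j * (n - 1 - j).choose (s - 1 - j)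

theorem neg_one_pow_mul_choose_mul_prod_eq {K : Type*} [Field K] [CharZero K] {n s j : ℕ}
    (hj : j < s) (hsn : s ≤ n) :
    (-1 : K) ^ (s + (s - j)) * ((s - 1).choose (s - j - 1) : K) *
        ∏ l ∈ Icc (s - j) (s - 1), ((n + l : ℕ) : K) / ((n - s + l : ℕ) : K)
      = ((n - 1).choose (s - 1) : K)⁻¹ * ussWeight n s j := by
  have hchoose := congrArg (Nat.cast : ℕ → K)
    (Nat.choose_mul (n := n - 1) (show j ≤ s - 1 by omega))
  push_cast at hchoose
  rw [prod_Icc_div_eq_choose_div_choose hj hsn,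
    show s + (s - j) = j + 2 * (s - j) by omega, pow_add, pow_mul, neg_one_sq, one_pow, mul_one,
    show s - j - 1 = s - 1 - j by omega, Nat.choose_symm (by omega), ussWeight]
  have : ((n - 1).choose j : K) ≠ 0 := Nat.cast_ne_zero.2 (Nat.choose_pos (by omega)).ne'
  have : ((n - 1).choose (s - 1) : K) ≠ 0 := Nat.cast_ne_zero.2 (Nat.choose_pos (by omega)).ne'
  push_cast
  field_simp
  linear_combination ((n + s - 1).choose j : K) * hchoose

theorem sum_ussWeight_mul_choose_sub (n s k : ℕ) (hs : 0 < s) (hsn : s ≤ n)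
    (hk : k ≤ n + s - 1) :
    ∑ j ∈ range s, ussWeight n s j * (n + s - 1 - j).choose k
      = (n + s - 1).choose k * Ring.choose ((k : ℤ) - s) (s - 1) := by
  have h := sum_neg_one_pow_mul_choose_mul_choose (n - 1) (s - 1) (n + s - 1 - k) (by omega)
  rw [Nat.sub_add_cancel hs,
    show ((n - 1 : ℕ) : ℤ) - (n + s - 1 - k : ℕ) = k - s by omega] at h
  rw [← h, mul_sum]
  refine sum_congr rfl fun j _ => ?_
  have := congrArg (Nat.cast : ℕ → ℤ) (Nat.choose_mul_choose_sub_comm (n + s - 1) j k)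
  push_cast at this
  simp only [ussWeight]
  linear_combination ((-1 : ℤ) ^ j * (n - 1 - j).choose (s - 1 - j)) * this

theorem sum_ussWeight_mul_choose_of_lt (n s k : ℕ) (hsn : s ≤ n) (hk : k < s) :
    ∑ j ∈ range s, ussWeight n s j * j.choose k
      = (n + s - 1).choose k * Ring.choose ((k : ℤ) - s) (s - 1) := by
  -- Only `j ≥ k` contribute; after `j = k + v` the alternating sum has upper argument `-s`.
  have h :=
    sum_neg_one_pow_mul_choose_mul_choose (n - 1 - k) (s - 1 - k) (n + s - 1 - k) (by omega)
  rw [show s - 1 - k + 1 = s - k by omega,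
    show ((n - 1 - k : ℕ) : ℤ) - (n + s - 1 - k : ℕ) = -((s - 1 : ℕ) + 1) by omega,
    Ring.choose_neg_natCast_add_one] at h
  rw [← sum_range_add_sum_Ico _ hk.le, sum_Ico_eq_sum_range,
    sum_eq_zero fun j hj => by rw [Nat.choose_eq_zero_of_lt (mem_range.1 hj)]; simp, zero_add,
    show (k : ℤ) - s = -((s - 1 - k : ℕ) + 1) by omega, Ring.choose_neg_natCast_add_one]
  have hsign : (-1 : ℤ) ^ (s - 1) = (-1) ^ k * (-1) ^ (s - 1 - k) := by
    rw [← pow_add, Nat.add_sub_cancel' (by omega)]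
  rw [hsign, add_comm (s - 1 - k), Nat.choose_symm_add, mul_assoc, ← h, mul_sum, mul_sum]
  refine sum_congr rfl fun v _ => ?_
  have := congrArg (Nat.cast : ℕ → ℤ) (Nat.choose_mul (n := n + s - 1) (Nat.le_add_right k v))
  push_cast [Nat.add_sub_cancel_left] at this
  simp only [ussWeight, Nat.sub_sub, ← add_assoc, pow_add] at this ⊢
  linear_combination ((-1 : ℤ) ^ k * (-1) ^ v * (n - (1 + k + v)).choose (s - (1 + k + v))) * this

theorem sum_ussWeight_mul_one_add_pow_sub {R : Type*} [CommRing R] (n s : ℕ) (hs : 0 < s)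
    (hsn : s ≤ n) (x : R) :
    ∑ j ∈ range s, (ussWeight n s j : R) * ((1 + x) ^ j - (1 + x) ^ (n + s - 1 - j))
      = -∑ k ∈ Icc (2 * s - 1) (n + s - 1),
          ((n + s - 1).choose k * (k - s).choose (s - 1) : R) * x ^ k := by
  set c : ℕ → R := fun k => ((n + s - 1).choose k * Ring.choose ((k : ℤ) - s) (s - 1) : ℤ)
  have low : ∑ j ∈ range s, (ussWeight n s j : R) * (1 + x) ^ j
      = ∑ k ∈ range s, c k * x ^ k := by
    refine (sum_mul_one_add_pow (range s) _ (fun j => j) (fun j hj => mem_range.1 hj) x).trans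
      (sum_congr rfl fun k hk => ?_)
    simp only [c]
    rw [← sum_ussWeight_mul_choose_of_lt n s k hsn (mem_range.1 hk)]
    push_cast; rfl
  have high : ∑ j ∈ range s, (ussWeight n s j : R) * (1 + x) ^ (n + s - 1 - j)
      = ∑ k ∈ range (n + s - 1 + 1), c k * x ^ k := by
    refine (sum_mul_one_add_pow (range s) _ (n + s - 1 - ·) (M := n + s - 1 + 1)
      (fun j _ => by omega) x).trans (sum_congr rfl fun k hk => ?_)
    simp only [c]
    rw [← sum_ussWeight_mul_choose_sub n s k hs hsn (by simpa [Nat.lt_succ_iff] using hk)]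
    push_cast; rfl
  have tail : ∀ k ∈ Ico s (n + s - 1 + 1),
      c k = (n + s - 1).choose k * (k - s).choose (s - 1) := fun k hk => by
    simp only [c]
    rw [show (k : ℤ) - s = ((k - s : ℕ) : ℤ) by have := (mem_Ico.1 hk).1; omega,
      Ring.choose_natCast]
    push_cast; rfl
  simp_rw [mul_sub, sum_sub_distrib, low, high]
  rw [← sum_range_add_sum_Ico _ (by omega : s ≤ n + s - 1 + 1), sub_add_cancel_left, neg_inj,
    sum_congr rfl fun k hk => by rw [tail k hk]]
  refine (sum_subset (fun k hk => ?_) (fun k hk hk' => ?_)).symm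
  · simp only [mem_Icc, mem_Ico] at hk ⊢; omega
  · simp only [mem_Icc, mem_Ico, not_and_or, not_le] at hk hk'
    rw [Nat.choose_eq_zero_of_lt (n := k - s) (by omega)]
    simp

/-- Closed form of the entry `Ũ_{ss}` appearing in the ratio `det B̃ / det B`:
`∑_{p=1}^{s} (−1)^{s+p} C(s−1,p−1) (∏_{l=p}^{s−1} (n+l)/(n−s+l))
    ((1+ξ)^{s−p} − (1+ξ)^{n+p−1})
  = −C(n−1,s−1)⁻¹ ∑_{k=2s−1}^{n+s−1} C(n+s−1,k) C(k−s,s−1) ξ^k`. -/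
theorem Uss_tilde_closed_form (s n : ℕ) (hs : 0 < s) (hsn : s ≤ n) (ξ : ℝ) :
    ∑ p ∈ Finset.Icc 1 s,
      (-1 : ℝ) ^ (s + p) * (Nat.choose (s - 1) (p - 1) : ℝ) *
        (∏ l ∈ Finset.Icc p (s - 1), ((n + l : ℕ) : ℝ) / ((n - s + l : ℕ) : ℝ)) *
        ((1 + ξ) ^ (s - p) - (1 + ξ) ^ (n + p - 1))
      = -((Nat.choose (n - 1) (s - 1) : ℝ)⁻¹) *
          ∑ k ∈ Finset.Icc (2 * s - 1) (n + s - 1),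
            (Nat.choose (n + s - 1) k : ℝ) * (Nat.choose (k - s) (s - 1) : ℝ) * ξ ^ k := by
  have reindex (f : ℕ → ℝ) : ∑ p ∈ Icc 1 s, f p = ∑ j ∈ range s, f (s - j) := by
    rw [range_eq_Ico, sum_Ico_reflect f 0 s.le_succ, Nat.add_sub_cancel_left, Nat.sub_zero,
      Ico_add_one_right_eq_Icc]
  calc _ = ∑ j ∈ range s, ((n - 1).choose (s - 1) : ℝ)⁻¹ *
        (ussWeight n s j * ((1 + ξ) ^ j - (1 + ξ) ^ (n + s - 1 - j))) := by
        rw [reindex]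
        refine sum_congr rfl fun j hj => ?_
        have := mem_range.1 hj
        rw [neg_one_pow_mul_choose_mul_prod_eq this hsn, show s - (s - j) = j by omega,
          show n + (s - j) - 1 = n + s - 1 - j by omega, mul_assoc]
    _ = _ := by rw [← mul_sum, sum_ussWeight_mul_one_add_pow_sub n s hs hsn]; ring
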